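/- Let γ ∈ (1/2, 1) and κ > 0. There exists a constant c > 0 (depending only on γ and κ) such that for all ℓ ∈ (0,1), all s ∈ (0,1), and all α, β ≥ 0: ∫_ℓ^1 (α u^(−γ) + β u^(γ−1)) · κ (min(u,s))^(−γ) (max(u,s))^(γ−1) du ≤ c(α log(1/ℓ) + β) s^(−γ) + 𝟙{s ≥ ℓ} · c(α ℓ^(1−2γ) + β log(1/ℓ)) s^(γ−1). -/
import Mathlib


open Real MeasureTheory
set_option maxHeartbeats 1000000

lemma intIoo_rpow (ℓ p : ℝ) (hℓ : 0 < ℓ) (hℓ1 : ℓ < 1) (hp : p ≠ -1) :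
    ∫ u in Set.Ioo ℓ 1, u ^ p = (1 - ℓ ^ (p+1)) / (p+1) := by
  rw [← integral_Ioc_eq_integral_Ioo, ← intervalIntegral.integral_of_le hℓ1.le,
    integral_rpow (Or.inr ⟨hp, by simp [Set.uIcc_of_le hℓ1.le]; exact hℓ⟩)]
  simp

lemma intIoo_inv (ℓ : ℝ) (hℓ : 0 < ℓ) (hℓ1 : ℓ < 1) :
    ∫ u in Set.Ioo ℓ 1, u ^ (-1 : ℝ) = Real.log (1/ℓ) := by
  rw [← integral_Ioc_eq_integral_Ioo, ← intervalIntegral.integral_of_le hℓ1.le]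
  simp_rw [Real.rpow_neg_one]
  rw [integral_inv (by simp [Set.uIcc_of_le hℓ1.le]; exact hℓ)]

lemma integrableOn_rpow_Ioo (ℓ p : ℝ) (hℓ : 0 < ℓ) :
    IntegrableOn (fun u : ℝ => u ^ p) (Set.Ioo ℓ 1) := by
  apply IntegrableOn.mono_set (t := Set.Icc ℓ 1) _ Set.Ioo_subset_Icc_self
  apply ContinuousOn.integrableOn_Icc
  intro x hx
  exact (Real.continuousAt_rpow_const x p (Or.inl (ne_of_gt (by linarith [hx.1])))).continuousWithinAt

lemma aux_coef1 (κ α β P L b : ℝ) (hκ : 0 ≤ κ) (hα : 0 ≤ α) (hβ : 0 ≤ β) (hb : 0 < b)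
    (hP : 0 ≤ P) (hL : 0 ≤ L) :
    κ * α * L + κ * β * ((1 - P) / b) ≤ κ * (1 + 1/b) * (α * L + β) := by
  have h2 : 0 ≤ κ * α * L * (1/b) := by positivity
  have h3 : 0 ≤ κ * β := by positivity
  have h4 : 0 ≤ κ * β * P * (1/b) := by positivity
  have e : κ * β * ((1 - P) / b) = κ * β * (1/b) - κ * β * P * (1/b) := by ring
  have e2 : κ * (1 + 1/b) * (α * L + β)
      = κ * α * L + κ * α * L * (1/b) + κ * β + κ * β * (1/b) := by ring
  linarith

lemma aux_coef2 (κ α β E L b : ℝ) (hκ : 0 ≤ κ) (hα : 0 ≤ α) (hβ : 0 ≤ β) (hb : 0 < b)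
    (hE : 0 ≤ E) (hL : 0 ≤ L) :
    κ * α * ((E - 1) / b) + κ * β * L ≤ κ * (1 + 1/b) * (α * E + β * L) := by
  have h2 : 0 ≤ κ * β * L * (1/b) := by positivity
  have h3 : 0 ≤ κ * α * E := by positivity
  have h4 : 0 ≤ κ * α * (1/b) := by positivity
  have e : κ * α * ((E - 1) / b) = κ * α * E * (1/b) - κ * α * (1/b) := by ring
  have e2 : κ * (1 + 1/b) * (α * E + β * L)
      = κ * α * E + κ * α * E * (1/b) + κ * β * L + κ * β * L * (1/b) := by ring
  linarith

theorem stmt_6 (γ κ : ℝ) (hγ : γ ∈ Set.Ioo (1/2 : ℝ) 1) (hκ : 0 < κ) :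
    ∃ c : ℝ, 0 < c ∧ ∀ ℓ ∈ Set.Ioo (0:ℝ) 1, ∀ s ∈ Set.Ioo (0:ℝ) 1, ∀ α β : ℝ,
      0 ≤ α → 0 ≤ β →
      (∫ u in Set.Ioo ℓ 1,
          (α * u ^ (-γ) + β * u ^ (γ - 1)) * (κ * (min u s) ^ (-γ) * (max u s) ^ (γ - 1)))
        ≤ c * (α * Real.log (1/ℓ) + β) * s ^ (-γ)
          + (if ℓ ≤ s then 1 else 0) * (c * (α * ℓ ^ (1 - 2*γ) + β * Real.log (1/ℓ)) * s ^ (γ - 1)) := by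
  obtain ⟨hγ1, hγ2⟩ := hγ
  have hb : (0:ℝ) < 2*γ - 1 := by linarith
  refine ⟨κ * (1 + 1/(2*γ-1)), by positivity, ?_⟩
  rintro ℓ ⟨hℓ0, hℓ1⟩ s ⟨hs0, hs1⟩ α β hα hβ
  set c := κ * (1 + 1/(2*γ-1)) with hc
  have hbinv : (0:ℝ) < 1/(2*γ-1) := by positivity
  have hlog : 0 ≤ Real.log (1/ℓ) := Real.log_nonneg (by rw [le_div_iff₀ hℓ0]; linarith)
  have hA : (0:ℝ) < s ^ (-γ) := rpow_pos_of_pos hs0 _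
  have hB : (0:ℝ) < s ^ (γ-1) := rpow_pos_of_pos hs0 _
  have hE : (1:ℝ) ≤ ℓ ^ (1-2*γ) := by
    exact Real.one_le_rpow_of_pos_of_le_one_of_nonpos hℓ0 hℓ1.le (by linarith)
  have hP0 : (0:ℝ) ≤ ℓ ^ (2*γ-1) := (rpow_pos_of_pos hℓ0 _).le
  rcases le_or_gt ℓ s with hls | hsl
  · -- case ℓ ≤ s
    rw [if_pos hls]
    have step1 : (∫ u in Set.Ioo ℓ 1,
          (α * u ^ (-γ) + β * u ^ (γ - 1)) * (κ * (min u s) ^ (-γ) * (max u s) ^ (γ - 1)))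
        ≤ ∫ u in Set.Ioo ℓ 1,
          (κ * α * s ^ (γ-1) * u ^ (-(2*γ)) + (κ * β * s ^ (γ-1) + κ * α * s ^ (-γ)) * u ^ (-1:ℝ)
            + κ * β * s ^ (-γ) * u ^ (2*γ-2)) := by
      apply setIntegral_mono_on ?_ ?_ measurableSet_Ioo ?_
      · apply IntegrableOn.mono_set (t := Set.Icc ℓ 1) _ Set.Ioo_subset_Icc_self
        apply ContinuousOn.integrableOn_Icc
        have hid : ContinuousOn (fun u : ℝ => u) (Set.Icc ℓ 1) := continuousOn_id
        have hrp : ∀ p : ℝ, ContinuousOn (fun u : ℝ => u ^ p) (Set.Icc ℓ 1) := fun p =>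
          hid.rpow_const (fun x hx => Or.inl (ne_of_gt (by linarith [hx.1])))
        apply ContinuousOn.mul
        · exact ((hrp _).const_smul α |>.add ((hrp _).const_smul β))
        · apply ContinuousOn.mul
          · apply ContinuousOn.mul continuousOn_const
            exact (hid.inf continuousOn_const).rpow_const
              (fun x hx => Or.inl (ne_of_gt (lt_min (by linarith [hx.1]) hs0)))
          · exact (hid.sup continuousOn_const).rpow_const
              (fun x hx => Or.inl (ne_of_gt (lt_of_lt_of_le hs0 (le_max_right _ _))))
      · exact (((integrableOn_rpow_Ioo ℓ _ hℓ0).const_mul _).add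
          ((integrableOn_rpow_Ioo ℓ _ hℓ0).const_mul _)).add
          ((integrableOn_rpow_Ioo ℓ _ hℓ0).const_mul _)
      · intro u hu
        have hu0 : 0 < u := lt_trans hℓ0 hu.1
        have h1 : u ^ (-γ) * u ^ (-γ) = u ^ (-(2*γ)) := by rw [← Real.rpow_add hu0]; ring_nf
        have h2 : u ^ (γ-1) * u ^ (γ-1) = u ^ (2*γ-2) := by rw [← Real.rpow_add hu0]; ring_nf
        have h3 : u ^ (-γ) * u ^ (γ-1) = u ^ (-1:ℝ) := by rw [← Real.rpow_add hu0]; ring_nf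
        have h4 : u ^ (γ-1) * u ^ (-γ) = u ^ (-1:ℝ) := by rw [← Real.rpow_add hu0]; ring_nf
        rcases le_total u s with hus | hsu
        · have hmin : min u s = u := min_eq_left hus
          have hmax : max u s = s := max_eq_right hus
          simp only [hmin, hmax]
          have heq : (α * u ^ (-γ) + β * u ^ (γ - 1)) * (κ * u ^ (-γ) * s ^ (γ - 1))
              = κ * α * s ^ (γ-1) * u ^ (-(2*γ)) + (κ * β * s ^ (γ-1)) * u ^ (-1:ℝ) := by
            linear_combination (κ * α * s ^ (γ-1)) * h1 + (κ * β * s ^ (γ-1)) * h4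
          rw [heq]
          nlinarith [mul_nonneg (mul_nonneg hκ.le hα) hA.le,
            mul_nonneg (mul_nonneg hκ.le hβ) hA.le, rpow_pos_of_pos hu0 (-1:ℝ),
            rpow_pos_of_pos hu0 (2*γ-2)]
        · have hmin : min u s = s := min_eq_right hsu
          have hmax : max u s = u := max_eq_left hsu
          simp only [hmin, hmax]
          have heq : (α * u ^ (-γ) + β * u ^ (γ - 1)) * (κ * s ^ (-γ) * u ^ (γ - 1))
              = (κ * α * s ^ (-γ)) * u ^ (-1:ℝ) + κ * β * s ^ (-γ) * u ^ (2*γ-2) := by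
            linear_combination (κ * α * s ^ (-γ)) * h3 + (κ * β * s ^ (-γ)) * h2
          rw [heq]
          nlinarith [mul_nonneg (mul_nonneg hκ.le hα) hB.le,
            mul_nonneg (mul_nonneg hκ.le hβ) hB.le, rpow_pos_of_pos hu0 (-1:ℝ),
            rpow_pos_of_pos hu0 (-(2*γ))]
    refine le_trans step1 ?_
    have i1 : IntegrableOn (fun u : ℝ => κ * α * s ^ (γ-1) * u ^ (-(2*γ))) (Set.Ioo ℓ 1) :=
      (integrableOn_rpow_Ioo ℓ _ hℓ0).const_mul _
    have i2 : IntegrableOn (fun u : ℝ => (κ * β * s ^ (γ-1) + κ * α * s ^ (-γ)) * u ^ (-1:ℝ))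
        (Set.Ioo ℓ 1) := (integrableOn_rpow_Ioo ℓ _ hℓ0).const_mul _
    have i3 : IntegrableOn (fun u : ℝ => κ * β * s ^ (-γ) * u ^ (2*γ-2)) (Set.Ioo ℓ 1) :=
      (integrableOn_rpow_Ioo ℓ _ hℓ0).const_mul _
    have i12 : IntegrableOn (fun u : ℝ => κ * α * s ^ (γ-1) * u ^ (-(2*γ))
        + (κ * β * s ^ (γ-1) + κ * α * s ^ (-γ)) * u ^ (-1:ℝ)) (Set.Ioo ℓ 1) := i1.add i2
    rw [integral_add i12 i3, integral_add i1 i2,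
      integral_const_mul, integral_const_mul, integral_const_mul,
      intIoo_inv ℓ hℓ0 hℓ1,
      intIoo_rpow ℓ (-(2*γ)) hℓ0 hℓ1 (by intro h; apply absurd hγ1; linarith),
      intIoo_rpow ℓ (2*γ-2) hℓ0 hℓ1 (by intro h; apply absurd hγ1; linarith),
      show (-(2*γ) + 1 : ℝ) = 1 - 2*γ by ring, show (2*γ-2+1 : ℝ) = 2*γ-1 by ring]
    have e1 : (1 - ℓ ^ (1-2*γ)) / (1 - 2*γ) = (ℓ ^ (1-2*γ) - 1) / (2*γ-1) := by
      rw [show (1 - 2*γ : ℝ) = -(2*γ-1) by ring, div_neg]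
      ring
    rw [e1]
    have key1 : κ * α * Real.log (1/ℓ) + κ * β * ((1 - ℓ ^ (2*γ-1)) / (2*γ-1))
        ≤ c * (α * Real.log (1/ℓ) + β) := by
      rw [hc]
      exact aux_coef1 κ α β _ _ _ hκ.le hα hβ hb hP0 hlog
    have key2 : κ * α * ((ℓ ^ (1-2*γ) - 1) / (2*γ-1)) + κ * β * Real.log (1/ℓ)
        ≤ c * (α * ℓ ^ (1-2*γ) + β * Real.log (1/ℓ)) := by
      rw [hc]
      exact aux_coef2 κ α β _ _ _ hκ.le hα hβ hb (by linarith) hlog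
    calc κ * α * s ^ (γ-1) * ((ℓ ^ (1-2*γ) - 1) / (2*γ-1))
          + (κ * β * s ^ (γ-1) + κ * α * s ^ (-γ)) * Real.log (1/ℓ)
          + κ * β * s ^ (-γ) * ((1 - ℓ ^ (2*γ-1)) / (2*γ-1))
        = s ^ (γ-1) * (κ * α * ((ℓ ^ (1-2*γ) - 1) / (2*γ-1)) + κ * β * Real.log (1/ℓ))
          + s ^ (-γ) * (κ * α * Real.log (1/ℓ) + κ * β * ((1 - ℓ ^ (2*γ-1)) / (2*γ-1))) := by
          ring
      _ ≤ s ^ (γ-1) * (c * (α * ℓ ^ (1-2*γ) + β * Real.log (1/ℓ)))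
          + s ^ (-γ) * (c * (α * Real.log (1/ℓ) + β)) :=
          add_le_add (mul_le_mul_of_nonneg_left key2 hB.le)
            (mul_le_mul_of_nonneg_left key1 hA.le)
      _ = c * (α * Real.log (1/ℓ) + β) * s ^ (-γ)
          + 1 * (c * (α * ℓ ^ (1 - 2*γ) + β * Real.log (1/ℓ)) * s ^ (γ - 1)) := by ring
  · -- case s < ℓ
    rw [if_neg (not_le.mpr hsl)]
    have heq : (∫ u in Set.Ioo ℓ 1,
          (α * u ^ (-γ) + β * u ^ (γ - 1)) * (κ * (min u s) ^ (-γ) * (max u s) ^ (γ - 1)))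
        = κ * s ^ (-γ) * α * Real.log (1/ℓ)
          + κ * s ^ (-γ) * β * ((1 - ℓ ^ (2*γ-2+1)) / (2*γ-2+1)) := by
      rw [setIntegral_congr_fun measurableSet_Ioo
        (g := fun u => κ * s ^ (-γ) * α * u ^ (-1:ℝ) + κ * s ^ (-γ) * β * u ^ (2*γ-2)) ?_]
      · have j1 : IntegrableOn (fun u : ℝ => κ * s ^ (-γ) * α * u ^ (-1:ℝ)) (Set.Ioo ℓ 1) :=
          (integrableOn_rpow_Ioo ℓ _ hℓ0).const_mul _
        have j2 : IntegrableOn (fun u : ℝ => κ * s ^ (-γ) * β * u ^ (2*γ-2)) (Set.Ioo ℓ 1) :=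
          (integrableOn_rpow_Ioo ℓ _ hℓ0).const_mul _
        rw [integral_add j1 j2,
          integral_const_mul, integral_const_mul, intIoo_inv ℓ hℓ0 hℓ1,
          intIoo_rpow ℓ (2*γ-2) hℓ0 hℓ1 (by intro h; apply absurd hγ1; linarith)]
      · intro u hu
        have hu0 : 0 < u := lt_trans hℓ0 hu.1
        have hmin : min u s = s := min_eq_right (le_of_lt (lt_trans hsl hu.1))
        have hmax : max u s = u := max_eq_left (le_of_lt (lt_trans hsl hu.1))
        simp only [hmin, hmax]
        have h2 : u ^ (γ-1) * u ^ (γ-1) = u ^ (2*γ-2) := by rw [← Real.rpow_add hu0]; ring_nf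
        have h3 : u ^ (-γ) * u ^ (γ-1) = u ^ (-1:ℝ) := by rw [← Real.rpow_add hu0]; ring_nf
        linear_combination (κ * s ^ (-γ) * α) * h3 + (κ * s ^ (-γ) * β) * h2
    rw [heq, show (2*γ-2+1 : ℝ) = 2*γ-1 by ring, zero_mul, add_zero]
    have key1 : κ * α * Real.log (1/ℓ) + κ * β * ((1 - ℓ ^ (2*γ-1)) / (2*γ-1))
        ≤ c * (α * Real.log (1/ℓ) + β) := by
      rw [hc]
      exact aux_coef1 κ α β _ _ _ hκ.le hα hβ hb hP0 hlog
    calc κ * s ^ (-γ) * α * Real.log (1/ℓ)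
          + κ * s ^ (-γ) * β * ((1 - ℓ ^ (2*γ-1)) / (2*γ-1))
        = s ^ (-γ) * (κ * α * Real.log (1/ℓ) + κ * β * ((1 - ℓ ^ (2*γ-1)) / (2*γ-1))) := by
          ring
      _ ≤ s ^ (-γ) * (c * (α * Real.log (1/ℓ) + β)) :=
          mul_le_mul_of_nonneg_left key1 hA.le
      _ = c * (α * Real.log (1/ℓ) + β) * s ^ (-γ) := by ring
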